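/- arXiv:1011.4833 — 2 statements merged into one kernel-verified Lean document; each statement's English description precedes it below -/
import Mathlib

section
/- For every formula F, the following HT-equivalences hold (each pair is satisfied by exactly the same HT-interpretations): F × F is HT-equivalent to F; ⊥ × F is HT-equivalent to F; F × ⊥ is HT-equivalent to F; ⊤ × F is HT-equivalent to ⊤; and F × ⊤ is HT-equivalent to F ∨ ¬F. -/
inductive Form (α : Type) : Type
  | atom : α → Form α
  | fls  : Form α
  | and  : Form α → Form α → Form α
  | or   : Form α → Form α → Form α
  | imp  : Form α → Form α → Form α

namespace Form

variable {α : Type}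

/-- ¬F abbreviates F → ⊥ -/
def neg (F : Form α) : Form α := imp F fls

/-- ⊤ abbreviates ⊥ → ⊥ -/
def tru : Form α := imp fls fls

/-- ordered disjunction F × G := F ∨ (¬F ∧ G) -/
def ox (F G : Form α) : Form α := or F (and (neg F) G)

/-- classical satisfaction -/
def csat (T : Set α) : Form α → Prop
  | atom p  => p ∈ T
  | fls     => False
  | and F G => csat T F ∧ csat T G
  | or F G  => csat T F ∨ csat T G
  | imp F G => csat T F → csat T G

/-- here-and-there satisfaction (for interpretations ⟨H,T⟩ with H ⊆ T) -/
def htsat (H T : Set α) : Form α → Prop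
  | atom p  => p ∈ H
  | fls     => False
  | and F G => htsat H T F ∧ htsat H T G
  | or F G  => htsat H T F ∨ htsat H T G
  | imp F G => (csat T F → csat T G) ∧ (¬ htsat H T F ∨ htsat H T G)

end Form

/-- HT-equivalence: satisfied by exactly the same HT-interpretations -/
def HTEquiv {α : Type} (F G : Form α) : Prop :=
  ∀ H T : Set α, H ⊆ T → (Form.htsat H T F ↔ Form.htsat H T G)

/-- ⟨T,T⟩ is an equilibrium model of the theory Γ -/
def EqModel {α : Type} (Γ : Set (Form α)) (T : Set α) : Prop :=
  (∀ F ∈ Γ, Form.htsat T T F) ∧ ∀ H : Set α, H ⊂ T → ¬ (∀ F ∈ Γ, Form.htsat H T F)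

/-- iterated ordered disjunction, associated to the left; ⊥ when empty -/
def oxList {α : Type} : List (Form α) → Form α
  | []      => Form.fls
  | a :: as => as.foldl Form.ox a

/-- iterated disjunction, associated to the left; ⊥ when empty -/
def orList {α : Type} : List (Form α) → Form α
  | []      => Form.fls
  | a :: as => as.foldl Form.or a

/-- iterated conjunction, associated to the left; ⊤ when empty -/
def andList {α : Type} : List (Form α) → Form α
  | []      => Form.tru
  | a :: as => as.foldl Form.and a

/-! By persistence, ⟨H,T⟩ ⊨ ¬F just when T ⊭ F, so ⟨H,T⟩ ⊨ F × G reduces to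
⟨H,T⟩ ⊨ F ∨ (T ⊭ F ∧ ⟨H,T⟩ ⊨ G), and each of the five equivalences becomes a propositional
tautology. -/

namespace Form

variable {α : Type} {H T : Set α}

theorem htsat.csat (hHT : H ⊆ T) :
    ∀ {F : Form α}, htsat H T F → csat T F
  | atom _, h => hHT h
  | and _ _, h => ⟨h.1.csat hHT, h.2.csat hHT⟩
  | or _ _, .inl h => .inl (h.csat hHT)
  | or _ _, .inr h => .inr (h.csat hHT)
  | imp _ _, h => h.1

theorem htsat_neg (hHT : H ⊆ T) {F : Form α} :
    htsat H T (neg F) ↔ ¬ csat T F :=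
  ⟨fun h => h.1, fun h => ⟨h, .inl fun hF => h (hF.csat hHT)⟩⟩

theorem htsat_tru : htsat H T (tru : Form α) :=
  ⟨id, .inl id⟩

theorem htsat_ox (hHT : H ⊆ T) {F G : Form α} :
    htsat H T (ox F G) ↔ htsat H T F ∨ (¬ csat T F ∧ htsat H T G) := by
  simp only [ox, htsat, htsat_neg hHT]

end Form

theorem ox_truth_constants {α : Type} (F : Form α) :
    HTEquiv (Form.ox F F) F ∧
    HTEquiv (Form.ox Form.fls F) F ∧
    HTEquiv (Form.ox F Form.fls) F ∧
    HTEquiv (Form.ox Form.tru F) Form.tru ∧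
    HTEquiv (Form.ox F Form.tru) (Form.or F (Form.neg F)) := by
  refine ⟨?_, ?_, ?_, ?_, ?_⟩ <;> intro H T hHT <;>
    simp only [Form.htsat_ox hHT, Form.htsat_neg hHT, Form.htsat_tru, Form.htsat, Form.csat] <;> tauto
end

section
/- Ordered disjunction does not left-distribute a conjunction: for distinct atoms f, g, h, the theory {(f ∧ g) × h} has exactly two equilibrium models, ⟨{f,g},{f,g}⟩ and ⟨{h},{h}⟩, whereas the theory {(f × h) ∧ (g × h)} has exactly four equilibrium models, with T ranging over {f,g}, {h}, {f,h} and {g,h}. In particular (f ∧ g) × h and (f × h) ∧ (g × h) are not HT-equivalent. -/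
/-!
For each formula `F` considered here and each fixed `T`, the sets `H ⊆ T` with `⟨H,T⟩ ⊨ F` are
exactly the supersets of one set `M`, read off from the atoms true in `T`: an ordered disjunction
`F × G` behaves like `F` when `T ⊨ F` and like `G` otherwise, and a conjunction takes the union.
Then `⟨T,T⟩` is an equilibrium model iff `M = T`, and solving this equation lists the models.
Since HT-equivalent formulas have the same equilibrium models, `T = {f, h}`, a model of
`(f × h) ∧ (g × h)` only, separates the two formulas.
-/

namespace Form

variable {α : Type}

theorem csat_of_htsat {H T : Set α} (hHT : H ⊆ T) :
    ∀ {F : Form α}, htsat H T F → csat T F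
  | atom _, hF => hHT hF
  | and _ _, hF => ⟨csat_of_htsat hHT hF.1, csat_of_htsat hHT hF.2⟩
  | or _ _, .inl hF => .inl (csat_of_htsat hHT hF)
  | or _ _, .inr hG => .inr (csat_of_htsat hHT hG)
  | imp _ _, hF => hF.1

theorem htsat_ox_of_csat {H T : Set α} {F : Form α} (G : Form α) (hF : csat T F) :
    htsat H T (ox F G) ↔ htsat H T F := by
  simp only [ox, neg, htsat, csat]
  tauto

theorem htsat_ox_of_not_csat {H T : Set α} (hHT : H ⊆ T) {F : Form α} (G : Form α)
    (hF : ¬ csat T F) : htsat H T (ox F G) ↔ htsat H T G := by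
  have hnF : ¬ htsat H T F := mt (csat_of_htsat hHT) hF
  simp only [ox, neg, htsat, csat]
  tauto

def LeastHere (F : Form α) (T M : Set α) : Prop :=
  ∀ H ⊆ T, htsat H T F ↔ M ⊆ H

theorem leastHere_atom (p : α) (T : Set α) : LeastHere (atom p) T {p} :=
  fun _ _ => Set.singleton_subset_iff.symm

theorem LeastHere.and {F G : Form α} {T M N : Set α} (hF : LeastHere F T M)
    (hG : LeastHere G T N) : LeastHere (and F G) T (M ∪ N) := fun H hHT => by
  rw [Set.union_subset_iff, ← hF H hHT, ← hG H hHT]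
  rfl

theorem LeastHere.ox_of_csat {F : Form α} {T M : Set α} (G : Form α) (hT : csat T F)
    (hF : LeastHere F T M) : LeastHere (ox F G) T M := fun H hHT => by
  rw [htsat_ox_of_csat G hT, hF H hHT]

theorem LeastHere.ox_of_not_csat {G : Form α} {T N : Set α} (F : Form α) (hT : ¬ csat T F)
    (hG : LeastHere G T N) : LeastHere (ox F G) T N := fun H hHT => by
  rw [htsat_ox_of_not_csat hHT G hT, hG H hHT]

end Form

open Form

theorem eqModel_singleton_iff_of_leastHere {α : Type} {F : Form α} {T M : Set α}
    (hF : LeastHere F T M) : EqModel {F} T ↔ M = T := by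
  simp only [EqModel, Set.mem_singleton_iff, forall_eq, hF T subset_rfl]
  constructor
  · rintro ⟨hMT, hmin⟩
    by_contra hne
    exact hmin M (hMT.ssubset_of_ne hne) ((hF M hMT).2 subset_rfl)
  · rintro rfl
    exact ⟨subset_rfl, fun H hHM hH => hHM.not_subset ((hF H hHM.subset).1 hH)⟩

theorem HTEquiv.eqModel_singleton_iff {α : Type} {F G : Form α} (hFG : HTEquiv F G)
    (T : Set α) : EqModel {F} T ↔ EqModel {G} T := by
  simp only [EqModel, Set.mem_singleton_iff, forall_eq]
  exact and_congr (hFG T T subset_rfl)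
    (forall_congr' fun H => imp_congr_right fun hHT => not_congr (hFG H T hHT.subset))
section Atoms

variable {α : Type} {f g h : α}

theorem eqModel_ox_and_atom_iff (hfh : f ≠ h) (T : Set α) :
    EqModel {ox (and (atom f) (atom g)) (atom h)} T ↔ T = {f, g} ∨ T = {h} := by
  by_cases hT : csat T (and (atom f) (atom g))
  · rw [eqModel_singleton_iff_of_leastHere
      (((leastHere_atom f T).and (leastHere_atom g T)).ox_of_csat (atom h) hT)]
    constructor
    · rintro rfl
      exact .inl Set.singleton_union
    · rintro (rfl | rfl)
      · exact Set.singleton_union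
      · simp [csat, hfh] at hT
  · rw [eqModel_singleton_iff_of_leastHere
      ((leastHere_atom h T).ox_of_not_csat (and (atom f) (atom g)) hT)]
    constructor
    · rintro rfl
      exact .inr rfl
    · rintro (rfl | rfl)
      · simp [csat] at hT
      · rfl

theorem eqModel_and_ox_atom_iff (hfg : f ≠ g) (hfh : f ≠ h) (hgh : g ≠ h) (T : Set α) :
    EqModel {and (ox (atom f) (atom h)) (ox (atom g) (atom h))} T ↔
      T = {f, g} ∨ T = {h} ∨ T = {f, h} ∨ T = {g, h} := by
  classical
  have leastHere_ox {p : α} :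
      LeastHere (ox (atom p) (atom h)) T (if p ∈ T then {p} else {h}) := by
    split_ifs with hp
    exacts [(leastHere_atom p T).ox_of_csat _ hp, (leastHere_atom h T).ox_of_not_csat _ hp]
  rw [eqModel_singleton_iff_of_leastHere (leastHere_ox.and leastHere_ox)]
  by_cases hf : f ∈ T <;> by_cases hg : g ∈ T <;> simp only [hf, hg, if_true, if_false] <;>
    constructor <;> (try rintro rfl) <;> (try rintro (rfl | rfl | rfl | rfl)) <;>
    simp_all [Set.union_singleton, Set.pair_comm, eq_comm]

end Atoms

theorem ox_no_left_distrib_over_and {α : Type} (f g h : α)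
    (hfg : f ≠ g) (hfh : f ≠ h) (hgh : g ≠ h) :
    ({T : Set α |
        EqModel {Form.ox (Form.and (Form.atom f) (Form.atom g)) (Form.atom h)} T} =
      {{f, g}, {h}}) ∧
    ({T : Set α |
        EqModel {Form.and (Form.ox (Form.atom f) (Form.atom h))
                          (Form.ox (Form.atom g) (Form.atom h))} T} =
      {{f, g}, {h}, {f, h}, {g, h}}) ∧
    ¬ HTEquiv (Form.ox (Form.and (Form.atom f) (Form.atom g)) (Form.atom h))
        (Form.and (Form.ox (Form.atom f) (Form.atom h))
                  (Form.ox (Form.atom g) (Form.atom h))) := by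
  refine ⟨Set.ext fun T => eqModel_ox_and_atom_iff hfh T,
    Set.ext fun T => eqModel_and_ox_atom_iff hfg hfh hgh T, fun hequiv => ?_⟩
  have hfhB := (eqModel_and_ox_atom_iff hfg hfh hgh {f, h}).2 (.inr (.inr (.inl rfl)))
  rcases (eqModel_ox_and_atom_iff (g := g) hfh {f, h}).1
      ((hequiv.eqModel_singleton_iff _).2 hfhB) with hpair | hsingle
  · have : h ∈ ({f, g} : Set α) := hpair ▸ Set.mem_insert_of_mem f rfl
    simp [hfh.symm, hgh.symm] at this
  · exact hfh (Set.mem_singleton_iff.1 (hsingle ▸ Set.mem_insert f {h}))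
end
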